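/- Let B = (B,+) be an abelian group, C = (C,·) a group, and φ, ψ : C → Aut(B) group homomorphisms satisfying φ_c ψ_{c'} = ψ_{c'} φ_c for all c, c' ∈ C. Define on B × C the operations (b_1,c_1) + (b_2,c_2) = (b_1 + φ_{c_1}(b_2), c_1c_2) and (φ_{c_1}(b_1), c_1) ∘ (φ_{c_2}(b_2), c_2) = (φ_{c_1c_2}(b_1 + ψ_{c_1}(b_2)), c_1c_2), so that (B × C, +, ∘) is a skew brace. Then (B × C, +, ∘) is λ-homomorphic if and only if (φ_c − id_B)(φ_{c'} − id_B) = 0 and (φ_c − id_B)(ψ_{c'} − id_B) = 0 hold for all c, c' ∈ C, where products and differences of automorphisms are taken in the endomorphism ring of the abelian group B. -/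

import Mathlib

/-! Under `hcomm`, the λ-map in the coordinates `a = (φ_c u, c)` is
`λ_a (x, d) = ((φ_d - 1) u + ψ_c x, d)`. So for `a = (φ_c u, c)` and `b = (φ_{c'} v, c')` the
first coordinates of `λ_{a+b} (x, d)` and `λ_a λ_b (x, d)` differ by
`(φ_d - 1)(φ_{c'}⁻¹ - 1) u - (φ_d - 1)(ψ_c - 1) v`, where `u` and `v` are free and independent. -/

variable {B C : Type*} [AddCommGroup B] [Group C]

/-- The multiplicative group structure that `AddAut A` carried in older Mathlib
(`e₁ * e₂ = e₂.trans e₁`, `1 = refl`, `e⁻¹ = e.symm`). -/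
instance addAutGroupOld (A : Type*) [Add A] : Group (AddAut A) where
  mul g h := AddEquiv.trans h g
  one := AddEquiv.refl _
  inv := AddEquiv.symm
  mul_assoc _ _ _ := rfl
  one_mul _ := rfl
  mul_one _ := rfl
  inv_mul_cancel := AddEquiv.self_trans_symm

/-- The addition `(b₁,c₁) + (b₂,c₂) = (b₁ + φ_{c₁}(b₂), c₁c₂)` on `B × C`. -/
def sbAdd (φ : C →* AddAut B) : B × C → B × C → B × C :=
  fun p q => (p.1 + φ p.2 q.1, p.2 * q.2)

/-- Negation for `sbAdd`: `-(b,c) = (φ_{c⁻¹}(-b), c⁻¹)`. -/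
def sbNeg (φ : C →* AddAut B) : B × C → B × C :=
  fun p => (φ p.2⁻¹ (-p.1), p.2⁻¹)

/-- The multiplication on `B × C` determined by
`(φ_{c₁}(b₁), c₁) ∘ (φ_{c₂}(b₂), c₂) = (φ_{c₁c₂}(b₁ + ψ_{c₁}(b₂)), c₁c₂)`. -/
def sbMul (φ ψ : C →* AddAut B) : B × C → B × C → B × C :=
  fun p q =>
    (φ (p.2 * q.2) ((φ p.2).symm p.1 + ψ p.2 ((φ q.2).symm q.1)), p.2 * q.2)

/-- Inversion for `sbMul`: the `∘`-inverse of `(φ_c(b), c)` is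
`(φ_{c⁻¹}(ψ_{c⁻¹}(-b)), c⁻¹)`. -/
def sbInv (φ ψ : C →* AddAut B) : B × C → B × C :=
  fun p => (φ p.2⁻¹ (ψ p.2⁻¹ (-((φ p.2).symm p.1))), p.2⁻¹)

/-- The lambda map of the skew brace `(B × C, +, ∘)`:
`λ_a(x) = -a + a ∘ x`. -/
def sbLam (φ ψ : C →* AddAut B) (a x : B × C) : B × C :=
  sbAdd φ (sbNeg φ a) (sbMul φ ψ a x)

section AddAutAction

variable {G A : Type*} [Group G] [Add A] (f : G →* AddAut A)

theorem addAutGroupOld_mul_apply (e₁ e₂ : AddAut A) (a : A) :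
    (e₁ * e₂) a = e₁ (e₂ a) := rfl

theorem addAutGroupOld_one_apply (a : A) : (1 : AddAut A) a = a := rfl

theorem symm_eq_map_inv (g : G) : (f g).symm = f g⁻¹ := by
  rw [map_inv]; rfl

theorem map_inv_apply_apply (g : G) (a : A) : f g⁻¹ (f g a) = a := by
  rw [← symm_eq_map_inv, AddEquiv.symm_apply_apply]

theorem apply_map_inv_apply (g : G) (a : A) : f g (f g⁻¹ a) = a := by
  rw [← symm_eq_map_inv, AddEquiv.apply_symm_apply]

end AddAutAction

section LambdaMap

variable (φ ψ : C →* AddAut B)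

theorem sbAdd_apply (a b : B) (c c' : C) : sbAdd φ (a, c) (b, c') = (a + φ c b, c * c') := rfl

theorem sbLam_apply (hcomm : ∀ (c c' : C) (b : B), φ c (ψ c' b) = ψ c' (φ c b))
    (a x : B) (c d : C) :
    sbLam φ ψ (a, c) (x, d) = (φ d (φ c⁻¹ a) - φ c⁻¹ a + ψ c x, d) := by
  simp only [sbLam, sbAdd, sbNeg, sbMul, symm_eq_map_inv, map_mul, addAutGroupOld_mul_apply,
    map_inv_apply_apply, hcomm, apply_map_inv_apply, map_neg, map_add, inv_mul_cancel_left]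
  congr 1
  abel

theorem sbLam_sbAdd_eq_iff (hcomm : ∀ (c c' : C) (b : B), φ c (ψ c' b) = ψ c' (φ c b))
    (u v x : B) (c c' d : C) :
    sbLam φ ψ (sbAdd φ (φ c u, c) (φ c' v, c')) (x, d) =
        sbLam φ ψ (φ c u, c) (sbLam φ ψ (φ c' v, c') (x, d)) ↔
      φ d (φ c'⁻¹ u - u) - (φ c'⁻¹ u - u) = φ d (ψ c v - v) - (ψ c v - v) := by
  rw [sbAdd_apply, sbLam_apply φ ψ hcomm, sbLam_apply φ ψ hcomm, sbLam_apply φ ψ hcomm,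
    Prod.mk.injEq, and_iff_left rfl, ← sub_eq_zero, ← sub_eq_zero (a := φ d _ - _)]
  simp only [mul_inv_rev, map_mul, addAutGroupOld_mul_apply, map_inv_apply_apply, map_add,
    map_sub, hcomm]
  convert Iff.rfl using 2
  abel

end LambdaMap

/-- **Theorem 3.2(c)**: given `φ_c ψ_{c'} = ψ_{c'} φ_c`, so that
`(B × C, +, ∘)` is a skew brace, it is λ-homomorphic
(`λ_{a+b} = λ_a λ_b`) if and only if `(φ_c - id)(φ_{c'} - id) = 0` and
`(φ_c - id)(ψ_{c'} - id) = 0` for all `c, c' ∈ C`. -/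
theorem first_construction_lambda_homomorphic_iff (φ ψ : C →* AddAut B)
    (hcomm : ∀ (c c' : C) (b : B), φ c (ψ c' b) = ψ c' (φ c b)) :
    (∀ a b x : B × C, sbLam φ ψ (sbAdd φ a b) x = sbLam φ ψ a (sbLam φ ψ b x)) ↔
    ((∀ (c c' : C) (b : B), φ c (φ c' b - b) - (φ c' b - b) = 0) ∧
      (∀ (c c' : C) (b : B), φ c (ψ c' b - b) - (ψ c' b - b) = 0)) := by
  constructor
  · intro hlam
    constructor
    · intro c c' b
      simpa [addAutGroupOld_one_apply] using
        (sbLam_sbAdd_eq_iff φ ψ hcomm b 0 0 1 c'⁻¹ c).1 (hlam _ _ _)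
    · intro c c' b
      simpa [addAutGroupOld_one_apply, eq_comm] using
        (sbLam_sbAdd_eq_iff φ ψ hcomm 0 b 0 c' 1 c).1 (hlam _ _ _)
  · rintro ⟨hφ, hψ⟩ ⟨a, c⟩ ⟨b, c'⟩ ⟨x, d⟩
    rw [← apply_map_inv_apply φ c a, ← apply_map_inv_apply φ c' b, sbLam_sbAdd_eq_iff φ ψ hcomm,
      hφ, hψ]
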